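/- Let R be a finite (commutative) ring and A a subgroup of its group of units. Then there exist t ≤ ⌈|R|/|A|⌉ elements a_1,...,a_t of A (repetitions allowed) with a_1 + ... + a_t = 0. -/

import Mathlib

/-!
Let `S ⊆ R` be the image of `A` and `τ` the least `t ≥ 1` with `0 ∈ t • S`. Multiplication by
`A` permutes `S` transitively, so `-S ⊆ (τ - 1) • S`, while `-S` misses `j • S` for `j < τ - 1`.
Hence the sets `B k = k • (S ∪ {0})` are proper for `k ≤ τ - 2`, and Hamidoune's isoperimetric
method shows that each step `B k ↦ B k + (S ∪ {0})` adds at least `|S|` elements: an atom of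
the Cayley graph that contains `0` is an `A`-invariant subgroup, which cannot meet `S` without
containing the whole additive group generated by `S`. Adding `-S` in the last step gives
`1 + (τ - 1) |A| ≤ |R|`.
-/

open Finset Pointwise

namespace Hamidoune

section AddCommGroup

variable {G : Type*} [AddCommGroup G] [DecidableEq G]

lemma card_union_add_add_card_inter_add_le (X Y T : Finset G) :
    #(X ∪ Y + T) + #(X ∩ Y + T) ≤ #(X + T) + #(Y + T) :=
  calc #(X ∪ Y + T) + #(X ∩ Y + T) ≤ #((X + T) ∪ (Y + T)) + #((X + T) ∩ (Y + T)) := by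
        rw [union_add]; gcongr; exact inter_add_subset
    _ = #(X + T) + #(Y + T) := card_union_add_card_inter _ _

def boundary (T X : Finset G) : ℕ := #(X + T) - #X

lemma card_add_eq_add_boundary {T : Finset G} (h0 : (0 : G) ∈ T) (X : Finset G) :
    #(X + T) = #X + boundary T X := by
  have := card_le_card (subset_add_left X h0)
  unfold boundary
  omega

end AddCommGroup

variable {G : Type*} [AddCommGroup G] [Fintype G] [DecidableEq G] {T X Y : Finset G}

/- In the Cayley digraph of `G` with connection set `T \ {0}`, `X + T` is the closed
neighbourhood of `X`; fragments, connectivity and atoms are Hamidoune's. -/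
structure IsFragment (T X : Finset G) : Prop where
  nonempty : X.Nonempty
  add_ne_univ : X + T ≠ univ

noncomputable def connectivity (T : Finset G) : ℕ :=
  sInf (boundary T '' {X | IsFragment T X})

noncomputable def atomCard (T : Finset G) : ℕ :=
  sInf (card '' {X | IsFragment T X ∧ boundary T X = connectivity T})

structure IsAtom (T X : Finset G) : Prop where
  isFragment : IsFragment T X
  boundary_eq : boundary T X = connectivity T
  card_eq : #X = atomCard T

lemma connectivity_le (hX : IsFragment T X) : connectivity T ≤ boundary T X :=
  Nat.sInf_le ⟨X, hX, rfl⟩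

lemma atomCard_le (hX : IsFragment T X) (hb : boundary T X = connectivity T) :
    atomCard T ≤ #X :=
  Nat.sInf_le ⟨X, ⟨hX, hb⟩, rfl⟩

lemma exists_isAtom (hX : IsFragment T X) : ∃ Y, IsAtom T Y := by
  obtain ⟨Y, hY, hYb⟩ := Nat.sInf_mem
    (⟨_, X, hX, rfl⟩ : (boundary T '' {X | IsFragment T X}).Nonempty)
  obtain ⟨Z, ⟨hZ, hZb⟩, hZc⟩ := Nat.sInf_mem
    (⟨_, Y, ⟨hY, hYb⟩, rfl⟩ :
      (card '' {X | IsFragment T X ∧ boundary T X = connectivity T}).Nonempty)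
  exact ⟨Z, hZ, hZb, hZc⟩

lemma IsFragment.inter (hX : IsFragment T X) (hne : (X ∩ Y).Nonempty) :
    IsFragment T (X ∩ Y) :=
  ⟨hne, fun h => hX.add_ne_univ (univ_subset_iff.mp (h ▸ add_subset_add_right inter_subset_left))⟩

lemma compl_add_add_neg_subset (X T : Finset G) : (X + T)ᶜ + -T ⊆ Xᶜ := by
  intro z hz
  obtain ⟨y, hy, t, ht, rfl⟩ := mem_add.mp hz
  rw [mem_compl] at hy ⊢
  intro hyt
  exact hy (by simpa using add_mem_add hyt (mem_neg'.mp ht))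

lemma IsFragment.compl_add (h0 : (0 : G) ∈ T) (hX : IsFragment T X) :
    IsFragment (-T) (X + T)ᶜ ∧ boundary (-T) (X + T)ᶜ ≤ boundary T X := by
  have hsub := compl_add_add_neg_subset X T
  refine ⟨⟨?_, fun h => ?_⟩, ?_⟩
  · exact nonempty_iff_ne_empty.mpr (by rw [Ne, compl_eq_empty_iff]; exact hX.add_ne_univ)
  · rw [h, univ_subset_iff, compl_eq_univ_iff] at hsub
    exact hX.nonempty.ne_empty hsub
  · have h1 := card_le_card hsub
    have := card_le_card (subset_add_left X h0)
    have := card_le_univ (X + T)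
    rw [card_compl] at h1
    unfold boundary
    rw [card_compl]
    omega

lemma connectivity_neg_le (h0 : (0 : G) ∈ T) (hX : IsFragment T X) :
    connectivity (-T) ≤ connectivity T := by
  obtain ⟨Y, hY⟩ := exists_isAtom hX
  obtain ⟨hY', hb⟩ := hY.isFragment.compl_add h0
  exact (connectivity_le hY').trans (hb.trans hY.boundary_eq.le)

lemma connectivity_neg (h0 : (0 : G) ∈ T) (hX : IsFragment T X) :
    connectivity (-T) = connectivity T := by
  refine (connectivity_neg_le h0 hX).antisymm ?_
  simpa using connectivity_neg_le (T := -T) (by simpa) (hX.compl_add h0).1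

lemma IsAtom.of_card_eq (hX : IsAtom T X) (hY : Y.Nonempty) (hc : #Y = #X)
    (hcT : #(Y + T) = #(X + T)) : IsAtom T Y where
  isFragment := ⟨hY, fun h => hX.isFragment.add_ne_univ
    (eq_univ_of_card _ (by rw [← hcT, h, card_univ]))⟩
  boundary_eq := by rw [boundary, hc, hcT]; exact hX.boundary_eq
  card_eq := hc.trans hX.card_eq

lemma IsAtom.add_singleton (hX : IsAtom T X) (g : G) : IsAtom T (X + {g}) :=
  hX.of_card_eq (hX.isFragment.nonempty.add (singleton_nonempty g)) (card_add_singleton X g)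
    (by rw [add_right_comm, card_add_singleton])

lemma IsAtom.image (hX : IsAtom T X) (e : G ≃+ G) (he : T.image e = T) :
    IsAtom T (X.image e) := by
  refine hX.of_card_eq (hX.isFragment.nonempty.image e) (card_image_of_injective _ e.injective) ?_
  conv_lhs => rw [← he, ← image_add]
  exact card_image_of_injective _ e.injective

lemma IsAtom.eq_of_inter_nonempty (h0 : (0 : G) ∈ T) (hα : atomCard T ≤ atomCard (-T))
    (hX : IsAtom T X) (hY : IsAtom T Y) (hne : (X ∩ Y).Nonempty) : X = Y := by
  have hZ := hX.isFragment.inter hne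
  have hZb := connectivity_le hZ
  have hZc := hne.card_pos
  have hsub := card_union_add_add_card_inter_add_le X Y T
  have hXc := hX.card_eq
  have hYc := hY.card_eq
  rw [card_add_eq_add_boundary h0 (X ∩ Y), card_add_eq_add_boundary h0 X,
    card_add_eq_add_boundary h0 Y, hX.boundary_eq, hY.boundary_eq] at hsub
  by_cases hU : X ∪ Y + T = univ
  · -- then the dual `(X + T)ᶜ` is a `(-T)`-fragment of minimal boundary smaller than `X`
    exfalso
    obtain ⟨hX', hb⟩ := hX.isFragment.compl_add h0
    have hκ := connectivity_neg h0 hX.isFragment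
    have hb' : boundary (-T) (X + T)ᶜ = connectivity (-T) :=
      le_antisymm (hb.trans (hX.boundary_eq.trans hκ.symm).le) (connectivity_le hX')
    have hα' := atomCard_le hX' hb'
    rw [card_compl, card_add_eq_add_boundary h0, hX.boundary_eq] at hα'
    rw [hU, card_univ] at hsub
    have := card_le_card (inter_subset_left (s₁ := X) (s₂ := Y))
    omega
  · have hW := connectivity_le
      (⟨hX.isFragment.nonempty.mono subset_union_left, hU⟩ : IsFragment T (X ∪ Y))
    rw [card_add_eq_add_boundary h0] at hsub
    have hXY := card_union_add_card_inter X Y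
    have hZα := atomCard_le hZ (by omega)
    have hZX := eq_of_subset_of_card_le (inter_subset_left (s₁ := X) (s₂ := Y)) (by omega)
    have hZY := eq_of_subset_of_card_le (inter_subset_right (s₁ := X) (s₂ := Y)) (by omega)
    rw [← hZX, hZY]

lemma IsAtom.add_mem_of_add_mem (h0 : (0 : G) ∈ T) (hα : atomCard T ≤ atomCard (-T))
    (hX : IsAtom T X) {x y g : G} (hx : x ∈ X) (hxg : x + g ∈ X) (hy : y ∈ X) : y + g ∈ X := by
  have hXg : X + {g} = X := (hX.add_singleton g).eq_of_inter_nonempty h0 hα hX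
    ⟨x + g, mem_inter.mpr ⟨add_mem_add hx (mem_singleton_self g), hxg⟩⟩
  exact hXg ▸ add_mem_add hy (mem_singleton_self g)

lemma IsAtom.exists_addSubgroup (h0 : (0 : G) ∈ T) (hα : atomCard T ≤ atomCard (-T))
    (hX : IsAtom T X) (hX0 : (0 : G) ∈ X) : ∃ H : AddSubgroup G, ∀ x, x ∈ H ↔ x ∈ X :=
  ⟨{ carrier := X
     zero_mem' := hX0
     add_mem' := fun {x y} hx hy =>
       hX.add_mem_of_add_mem h0 hα hX0 (by rwa [zero_add]) hx
     neg_mem' := fun {y} hy => by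
       simpa using hX.add_mem_of_add_mem h0 hα hy (by rwa [add_neg_cancel]) hX0 },
   fun _ => Iff.rfl⟩

lemma exists_isAtom_zero_mem (hX : IsFragment T X) : ∃ Z, IsAtom T Z ∧ (0 : G) ∈ Z := by
  obtain ⟨Y, hY⟩ := exists_isAtom hX
  obtain ⟨y, hy⟩ := hY.isFragment.nonempty
  exact ⟨Y + {-y}, hY.add_singleton (-y), by simpa using add_mem_add hy (mem_singleton_self (-y))⟩

lemma le_connectivity_or_exists_addSubgroup_of_atomCard_le (Γ : Set (G ≃+ G))
    (h0 : (0 : G) ∈ T) (hΓ : ∀ γ ∈ Γ, T.image γ = T) (hα : atomCard T ≤ atomCard (-T))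
    (hX : IsFragment T X) :
    #T ≤ connectivity T + 1 ∨ ∃ H : AddSubgroup G, H ≠ ⊤ ∧ (∀ γ ∈ Γ, ∀ x ∈ H, γ x ∈ H) ∧
      ∃ t ∈ T, t ≠ 0 ∧ t ∈ H := by
  obtain ⟨Z, hZ, hZ0⟩ := exists_isAtom_zero_mem hX
  obtain ⟨H, hH⟩ := hZ.exists_addSubgroup h0 hα hZ0
  by_cases hT : ∃ t ∈ T, t ≠ 0 ∧ t ∈ H
  · refine Or.inr ⟨H, fun htop => hZ.isFragment.add_ne_univ ?_, fun γ hγ x hx => ?_, hT⟩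
    · exact eq_univ_of_forall fun x =>
        subset_add_left _ h0 ((hH x).mp (htop ▸ AddSubgroup.mem_top x))
    · have hγZ := (hZ.image γ (hΓ γ hγ)).eq_of_inter_nonempty h0 hα hZ
        ⟨0, mem_inter.mpr ⟨mem_image.mpr ⟨0, hZ0, map_zero γ⟩, hZ0⟩⟩
      rw [hH, ← hγZ]
      exact mem_image_of_mem γ ((hH x).mp hx)
  · -- the atom meets `T` only in `0`, and both lie in its neighbourhood
    left
    have hinter : Z ∩ T ⊆ {0} := fun t ht => mem_singleton.mpr <| by_contra fun ht0 =>
      hT ⟨t, (mem_inter.mp ht).2, ht0, (hH t).mpr (mem_inter.mp ht).1⟩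
    have hunion : Z ∪ T ⊆ Z + T := union_subset (subset_add_left _ h0) (subset_add_right _ hZ0)
    have := card_union_add_card_inter Z T
    have := card_le_card hinter
    have := card_le_card hunion
    rw [card_add_eq_add_boundary h0, hZ.boundary_eq] at this
    rw [card_singleton] at *
    omega

theorem le_connectivity_or_exists_addSubgroup (Γ : Set (G ≃+ G)) (h0 : (0 : G) ∈ T)
    (hΓ : ∀ γ ∈ Γ, T.image γ = T) (hX : IsFragment T X) :
    #T ≤ connectivity T + 1 ∨ ∃ H : AddSubgroup G, H ≠ ⊤ ∧ (∀ γ ∈ Γ, ∀ x ∈ H, γ x ∈ H) ∧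
      ∃ t ∈ T, t ≠ 0 ∧ t ∈ H := by
  rcases le_total (atomCard T) (atomCard (-T)) with hα | hα
  · exact le_connectivity_or_exists_addSubgroup_of_atomCard_le Γ h0 hΓ hα hX
  have hΓ' : ∀ γ ∈ Γ, (-T).image γ = -T := fun γ hγ => by rw [image_neg, hΓ γ hγ]
  rcases le_connectivity_or_exists_addSubgroup_of_atomCard_le Γ (by simpa) hΓ'
      (by rwa [neg_neg]) (hX.compl_add h0).1 with h | ⟨H, hH, hΓH, t, ht, ht0, htH⟩
  · rw [card_neg, connectivity_neg h0 hX] at h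
    exact Or.inl h
  · exact Or.inr ⟨H, hH, hΓH, -t, mem_neg'.mp ht, neg_ne_zero.mpr ht0, H.neg_mem htH⟩

end Hamidoune

namespace Finset

open Hamidoune

lemma image_eq_self_of_mapsTo {α : Type*} [DecidableEq α] {f : α → α} (hf : f.Injective)
    {s : Finset α} (h : ∀ x ∈ s, f x ∈ s) : s.image f = s :=
  eq_of_subset_of_card_le (image_subset_iff.mpr h) (card_image_of_injective _ hf).ge

lemma exists_sum_eq_of_mem_nsmul_image {ι M : Type*} [AddCommMonoid M] [DecidableEq M]
    (f : ι → M) (s : Finset ι) {n : ℕ} {x : M} (hx : x ∈ n • s.image f) :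
    ∃ g : Fin n → ι, ∑ i, f (g i) = x := by
  obtain ⟨h, rfl⟩ := mem_nsmul.mp hx
  choose g _ hg using fun i => mem_image.mp (h i).2
  exact ⟨g, by simp [hg, List.sum_ofFn]⟩

variable {G : Type*} [AddCommGroup G] [DecidableEq G] {S : Finset G}

lemma exists_le_of_mem_nsmul_insert_zero {x : G} :
    ∀ {n : ℕ}, x ∈ n • insert 0 S → ∃ j ≤ n, x ∈ j • S
  | 0, hx => ⟨0, le_rfl, hx⟩
  | n + 1, hx => by
    rw [succ_nsmul] at hx
    obtain ⟨y, hy, s, hs, rfl⟩ := mem_add.mp hx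
    obtain ⟨j, hj, hy⟩ := exists_le_of_mem_nsmul_insert_zero hy
    rcases mem_insert.mp hs with rfl | hs
    · exact ⟨j, by omega, by rwa [add_zero]⟩
    · exact ⟨j + 1, by omega, by rw [succ_nsmul]; exact add_mem_add hy hs⟩

lemma neg_mem_nsmul_of_zero_mem_nsmul (Γ : Set (G ≃+ G)) (hΓ : ∀ γ ∈ Γ, ∀ s ∈ S, γ s ∈ S)
    (htrans : ∀ s ∈ S, ∀ s' ∈ S, ∃ γ ∈ Γ, γ s = s') {k : ℕ} (hk : (0 : G) ∈ (k + 1) • S)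
    {a : G} (ha : a ∈ S) : -a ∈ k • S := by
  rw [succ_nsmul] at hk
  obtain ⟨y, hy, c, hc, hyc⟩ := mem_add.mp hk
  obtain ⟨γ, hγ, rfl⟩ := htrans c hc a ha
  have hγy : γ y ∈ (k • S).image γ := mem_image_of_mem γ hy
  rwa [image_nsmul, image_eq_self_of_mapsTo γ.injective (hΓ γ hγ),
    eq_neg_of_add_eq_zero_left hyc, map_neg] at hγy

lemma exists_addEquiv_closure_restrict (γ : G ≃+ G) (hγ : ∀ s ∈ S, γ s ∈ S) :
    ∃ γ' : AddSubgroup.closure (S : Set G) ≃+ AddSubgroup.closure (S : Set G),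
      ∀ x, (γ' x : G) = γ x := by
  have hV : (AddSubgroup.closure (S : Set G)).map (γ : G →+ G) = AddSubgroup.closure S := by
    rw [AddMonoidHom.map_closure]
    congr 1
    exact_mod_cast image_eq_self_of_mapsTo γ.injective hγ
  exact ⟨(γ.addSubgroupMap _).trans (AddEquiv.addSubgroupCongr hV), fun _ => rfl⟩

variable [Fintype G]

lemma exists_pos_zero_mem_nsmul (hS : S.Nonempty) : ∃ k, 0 < k ∧ (0 : G) ∈ k • S := by
  obtain ⟨s, hs⟩ := hS
  exact ⟨addOrderOf s, addOrderOf_pos s, addOrderOf_nsmul_eq_zero s ▸ nsmul_mem_nsmul hs⟩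

lemma card_add_card_le_card_add_of_isFragment (Γ : Set (G ≃+ G))
    (hgen : AddSubgroup.closure (S : Set G) = ⊤) (hΓ : ∀ γ ∈ Γ, ∀ s ∈ S, γ s ∈ S)
    (htrans : ∀ s ∈ S, ∀ s' ∈ S, ∃ γ ∈ Γ, γ s = s') (h0 : (0 : G) ∉ S) {X : Finset G}
    (hX : IsFragment (insert 0 S) X) : #X + #S ≤ #(X + insert 0 S) := by
  have hΓT : ∀ γ ∈ Γ, (insert 0 S).image γ = insert 0 S := fun γ hγ => by
    rw [image_insert, map_zero, image_eq_self_of_mapsTo γ.injective (hΓ γ hγ)]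
  rcases le_connectivity_or_exists_addSubgroup Γ (mem_insert_self 0 S) hΓT hX with
    hκ | ⟨H, hH, hΓH, t, ht, ht0, htH⟩
  · rw [card_add_eq_add_boundary (mem_insert_self 0 S)]
    rw [card_insert_of_notMem h0] at hκ
    have := connectivity_le hX
    omega
  · -- by transitivity `H` contains `S`, hence the subgroup it generates
    refine absurd (eq_top_iff.mpr (hgen ▸ (AddSubgroup.closure_le H).mpr fun s hs => ?_)) hH
    obtain ⟨γ, hγ, rfl⟩ := htrans t ((mem_insert.mp ht).resolve_left ht0) s hs
    exact hΓH γ hγ t htH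

lemma one_add_mul_card_le_card_nsmul
    (hfrag : ∀ X, IsFragment (insert 0 S) X → #X + #S ≤ #(X + insert 0 S)) :
    ∀ {m : ℕ}, m • insert 0 S ≠ univ → 1 + m * #S ≤ #(m • insert 0 S)
  | 0, _ => by simp
  | m + 1, hm => by
    have hsub : m • insert 0 S ⊆ (m + 1) • insert 0 S :=
      nsmul_subset_nsmul subset_rfl (mem_insert_self 0 S) m.le_succ
    have ih := one_add_mul_card_le_card_nsmul hfrag fun h => hm (univ_subset_iff.mp (h ▸ hsub))
    have hstep := hfrag _ ⟨⟨0, zero_mem_nsmul (mem_insert_self 0 S)⟩, by rwa [← succ_nsmul]⟩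
    rw [← succ_nsmul, Nat.succ_mul] at *
    omega

theorem exists_zero_mem_nsmul_le_of_closure_eq_top (Γ : Set (G ≃+ G)) (hS : S.Nonempty)
    (hgen : AddSubgroup.closure (S : Set G) = ⊤) (hΓ : ∀ γ ∈ Γ, ∀ s ∈ S, γ s ∈ S)
    (htrans : ∀ s ∈ S, ∀ s' ∈ S, ∃ γ ∈ Γ, γ s = s') :
    ∃ t, 0 < t ∧ t ≤ (Fintype.card G + #S - 1) / #S ∧ (0 : G) ∈ t • S := by
  have hn := hS.card_pos
  have hN : 0 < Fintype.card G := Fintype.card_pos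
  by_cases h0 : (0 : G) ∈ S
  · exact ⟨1, one_pos, (Nat.le_div_iff_mul_le hn).mpr (by omega), by rwa [one_nsmul]⟩
  have hex := exists_pos_zero_mem_nsmul hS
  obtain ⟨hτ, hτ0⟩ := Nat.find_spec hex
  obtain ⟨m, hm⟩ : ∃ m, Nat.find hex = m + 2 := ⟨Nat.find hex - 2, by
    have : Nat.find hex ≠ 1 := fun h => h0 (by simpa [h] using hτ0)
    omega⟩
  rw [hm] at hτ0
  have hneg (a : G) (ha : a ∈ S) : -a ∈ (m + 1) • S :=
    neg_mem_nsmul_of_zero_mem_nsmul Γ hΓ htrans hτ0 ha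
  have hnot (a : G) (ha : a ∈ S) : -a ∉ m • insert 0 S := fun h => by
    obtain ⟨j, hj, hja⟩ := exists_le_of_mem_nsmul_insert_zero h
    refine Nat.find_min hex (m := j + 1) (by omega) ⟨j.succ_pos, ?_⟩
    simpa [succ_nsmul] using add_mem_add hja ha
  obtain ⟨a, ha⟩ := hS
  have hB := one_add_mul_card_le_card_nsmul
    (fun _ => card_add_card_le_card_add_of_isFragment Γ hgen hΓ htrans h0)
    (fun h => hnot a ha (h ▸ mem_univ _))
  have hlast : #(m • insert 0 S) + #S ≤ #((m + 1) • insert 0 S) := by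
    have hdisj : Disjoint (m • insert 0 S) (-S) :=
      disjoint_right.mpr fun x hx => by simpa using hnot (-x) (mem_neg'.mp hx)
    rw [← card_neg S, ← card_union_of_disjoint hdisj]
    refine card_le_card (union_subset ?_ fun x hx => ?_)
    · exact nsmul_subset_nsmul subset_rfl (mem_insert_self 0 S) m.le_succ
    · simpa using nsmul_subset_nsmul_left (subset_insert 0 S) (hneg (-x) (mem_neg'.mp hx))
  have hN' := card_le_univ ((m + 1) • insert 0 S)
  refine ⟨m + 2, by omega, (Nat.le_div_iff_mul_le hn).mpr ?_, hτ0⟩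
  rw [Nat.add_mul]
  omega

theorem exists_zero_mem_nsmul_le (Γ : Set (G ≃+ G)) (hS : S.Nonempty)
    (hΓ : ∀ γ ∈ Γ, ∀ s ∈ S, γ s ∈ S) (htrans : ∀ s ∈ S, ∀ s' ∈ S, ∃ γ ∈ Γ, γ s = s') :
    ∃ t, 0 < t ∧ t ≤ (Fintype.card G + #S - 1) / #S ∧ (0 : G) ∈ t • S := by
  classical
  set V := AddSubgroup.closure (S : Set G)
  set S' : Finset V := S.subtype (· ∈ V)
  have hS' : #S' = #S := by
    rw [card_subtype]
    exact congrArg card (filter_true_of_mem fun s hs => AddSubgroup.subset_closure hs)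
  have hgen : AddSubgroup.closure (S' : Set V) = ⊤ := by
    convert AddSubgroup.closure_closure_coe_preimage (k := (S : Set G))
    ext; simp [S']
  let Γ' : Set (V ≃+ V) := {γ' | ∃ γ ∈ Γ, ∀ x, (γ' x : G) = γ x}
  have hΓ' : ∀ γ' ∈ Γ', ∀ s ∈ S', γ' s ∈ S' := by
    rintro γ' ⟨γ, hγ, hγ'⟩ s hs
    simpa [S', hγ'] using hΓ γ hγ s (by simpa [S'] using hs)
  have htrans' : ∀ s ∈ S', ∀ s' ∈ S', ∃ γ' ∈ Γ', γ' s = s' := by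
    intro s hs s' hs'
    obtain ⟨γ, hγ, hγs⟩ := htrans s (by simpa [S'] using hs) s' (by simpa [S'] using hs')
    obtain ⟨γ', hγ'⟩ := exists_addEquiv_closure_restrict γ (hΓ γ hγ)
    exact ⟨γ', ⟨γ, hγ, hγ'⟩, Subtype.ext ((hγ' s).trans hγs)⟩
  obtain ⟨a, ha⟩ := hS
  obtain ⟨t, ht, htle, h0⟩ := exists_zero_mem_nsmul_le_of_closure_eq_top Γ'
    ⟨⟨a, AddSubgroup.subset_closure ha⟩, by simpa [S'] using ha⟩ hgen hΓ' htrans'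
  refine ⟨t, ht, ?_, ?_⟩
  · rw [← hS']
    exact htle.trans (Nat.div_le_div_right (by
      have := Fintype.card_subtype_le (· ∈ V)
      omega))
  · have himage : S'.image V.subtype ⊆ S := fun x hx => by
      obtain ⟨y, hy, rfl⟩ := mem_image.mp hx
      simpa [S'] using hy
    have := mem_image_of_mem V.subtype h0
    rw [image_nsmul, map_zero] at this
    exact nsmul_subset_nsmul_left himage this

end Finset

theorem stmt_1 (R : Type*) [CommRing R] [Fintype R] (A : Subgroup Rˣ) :
    ∃ t : ℕ, 0 < t ∧ t ≤ (Fintype.card R + Nat.card A - 1) / Nat.card A ∧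
      ∃ a : Fin t → A, (∑ i, ((a i : Rˣ) : R)) = 0 := by
  classical
  set S : Finset R := univ.image fun a : A => ((a : Rˣ) : R)
  have hS : #S = Nat.card A :=
    (card_image_of_injective _ (Units.val_injective.comp Subtype.val_injective)).trans
      (by rw [card_univ, Nat.card_eq_fintype_card])
  set Γ : Set (R ≃+ R) := Set.range fun a : A => DistribMulAction.toAddAut Rˣ R a
  have hΓ : ∀ γ ∈ Γ, ∀ s ∈ S, γ s ∈ S := by
    rintro _ ⟨a, rfl⟩ _ hs
    obtain ⟨b, -, rfl⟩ := mem_image.mp hs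
    exact mem_image.mpr ⟨a * b, mem_univ _, by simp [Units.smul_def]⟩
  have htrans : ∀ s ∈ S, ∀ s' ∈ S, ∃ γ ∈ Γ, γ s = s' := by
    intro s hs s' hs'
    obtain ⟨a, -, rfl⟩ := mem_image.mp hs
    obtain ⟨b, -, rfl⟩ := mem_image.mp hs'
    exact ⟨_, ⟨b * a⁻¹, rfl⟩, by simp [Units.smul_def]⟩
  obtain ⟨t, ht, htle, h0⟩ :=
    exists_zero_mem_nsmul_le Γ ⟨1, mem_image.mpr ⟨1, mem_univ _, rfl⟩⟩ hΓ htrans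
  exact ⟨t, ht, hS ▸ htle, exists_sum_eq_of_mem_nsmul_image _ _ h0⟩
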